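/- arXiv:1509.02601 — 5 statements merged into one kernel-verified Lean document; each statement's English description precedes it below -/
import Mathlib

section
/- Let β ∈ (0,π), let P ⊆ ℝ² be a set of points, and let x ∈ ℝ². Then x lies in the topological interior of the β-hull O_βH(P) if and only if each of the four open β-quadrants with apex x (namely x + C_TR(β), x + C_TL(β), x + C_BL(β), and x + C_BR(β)) contains at least one point of P. -/
open Real Set MeasureTheory Pointwise

/-- The open top-right cone for angle `β`. -/
def CTR (β : ℝ) : Set (ℝ × ℝ) :=
  {p | ∃ s t : ℝ, 0 < s ∧ 0 < t ∧ p = s • ((1 : ℝ), (0 : ℝ)) + t • (Real.cos β, Real.sin β)}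

/-- The open top-left cone for angle `β`. -/
def CTL (β : ℝ) : Set (ℝ × ℝ) :=
  {p | ∃ s t : ℝ, 0 < s ∧ 0 < t ∧ p = s • ((-1 : ℝ), (0 : ℝ)) + t • (Real.cos β, Real.sin β)}

/-- The open bottom-left cone: the reflection of the top-right cone. -/
def CBL (β : ℝ) : Set (ℝ × ℝ) := {p | -p ∈ CTR β}

/-- The open bottom-right cone: the reflection of the top-left cone. -/
def CBR (β : ℝ) : Set (ℝ × ℝ) := {p | -p ∈ CTL β}

/-- The quad `a + C` of a set `C` by a point `a`. -/
def quad (a : ℝ × ℝ) (C : Set (ℝ × ℝ)) : Set (ℝ × ℝ) := {x | x - a ∈ C}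

/-- A region `Q` is `P`-free if it contains no point of `P`. -/
def PFree (P Q : Set (ℝ × ℝ)) : Prop := P ∩ Q = ∅

/-- `C` is one of the four β-cones. -/
def IsBetaCone (β : ℝ) (C : Set (ℝ × ℝ)) : Prop :=
  C = CTR β ∨ C = CTL β ∨ C = CBL β ∨ C = CBR β

/-- The β-hull of `P`: the plane minus the union of all `P`-free β-quadrants. -/
def betaHull (β : ℝ) (P : Set (ℝ × ℝ)) : Set (ℝ × ℝ) :=
  {x | ∀ (a : ℝ × ℝ) (C : Set (ℝ × ℝ)), IsBetaCone β C → PFree P (quad a C) →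
    x ∉ quad a C}

lemma mem_CTR' {β : ℝ} (hs : 0 < Real.sin β) {p : ℝ × ℝ} :
    p ∈ CTR β ↔ 0 < p.2 ∧ 0 < p.1 * Real.sin β - p.2 * Real.cos β := by
  constructor
  · rintro ⟨s, t, hs', ht, rfl⟩
    refine ⟨by simpa using mul_pos ht hs, ?_⟩
    have : (s • ((1:ℝ),(0:ℝ)) + t • (Real.cos β, Real.sin β)).1 * Real.sin β -
        (s • ((1:ℝ),(0:ℝ)) + t • (Real.cos β, Real.sin β)).2 * Real.cos β
        = s * Real.sin β := by simp; ring
    rw [this]; exact mul_pos hs' hs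
  · rintro ⟨h2, h1⟩
    refine ⟨(p.1 * Real.sin β - p.2 * Real.cos β) / Real.sin β, p.2 / Real.sin β,
      div_pos h1 hs, div_pos h2 hs, ?_⟩
    have hne := hs.ne'
    apply Prod.ext <;> simp <;> field_simp <;> ring

lemma mem_CTL' {β : ℝ} (hs : 0 < Real.sin β) {p : ℝ × ℝ} :
    p ∈ CTL β ↔ 0 < p.2 ∧ 0 < p.2 * Real.cos β - p.1 * Real.sin β := by
  constructor
  · rintro ⟨s, t, hs', ht, rfl⟩
    refine ⟨by simpa using mul_pos ht hs, ?_⟩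
    have : (s • ((-1:ℝ),(0:ℝ)) + t • (Real.cos β, Real.sin β)).2 * Real.cos β -
        (s • ((-1:ℝ),(0:ℝ)) + t • (Real.cos β, Real.sin β)).1 * Real.sin β
        = s * Real.sin β := by simp; ring
    rw [this]; exact mul_pos hs' hs
  · rintro ⟨h2, h1⟩
    refine ⟨(p.2 * Real.cos β - p.1 * Real.sin β) / Real.sin β, p.2 / Real.sin β,
      div_pos h1 hs, div_pos h2 hs, ?_⟩
    have hne := hs.ne'
    apply Prod.ext <;> simp <;> field_simp <;> ring

lemma isOpen_CTR {β : ℝ} (hs : 0 < Real.sin β) : IsOpen (CTR β) := by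
  have : CTR β = {p : ℝ × ℝ | 0 < p.2} ∩
      {p : ℝ × ℝ | 0 < p.1 * Real.sin β - p.2 * Real.cos β} := by
    ext p; exact mem_CTR' hs
  rw [this]
  exact (isOpen_lt continuous_const continuous_snd).inter
    (isOpen_lt continuous_const (by fun_prop))

lemma isOpen_CTL {β : ℝ} (hs : 0 < Real.sin β) : IsOpen (CTL β) := by
  have : CTL β = {p : ℝ × ℝ | 0 < p.2} ∩
      {p : ℝ × ℝ | 0 < p.2 * Real.cos β - p.1 * Real.sin β} := by
    ext p; exact mem_CTL' hs
  rw [this]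
  exact (isOpen_lt continuous_const continuous_snd).inter
    (isOpen_lt continuous_const (by fun_prop))

lemma add_mem_CTR {β : ℝ} {u v : ℝ × ℝ} (hu : u ∈ CTR β) (hv : v ∈ CTR β) :
    u + v ∈ CTR β := by
  obtain ⟨s1, t1, hs1, ht1, rfl⟩ := hu
  obtain ⟨s2, t2, hs2, ht2, rfl⟩ := hv
  exact ⟨s1 + s2, t1 + t2, by linarith, by linarith, by module⟩

lemma add_mem_CTL {β : ℝ} {u v : ℝ × ℝ} (hu : u ∈ CTL β) (hv : v ∈ CTL β) :
    u + v ∈ CTL β := by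
  obtain ⟨s1, t1, hs1, ht1, rfl⟩ := hu
  obtain ⟨s2, t2, hs2, ht2, rfl⟩ := hv
  exact ⟨s1 + s2, t1 + t2, by linarith, by linarith, by module⟩

lemma smul_dir_CTR {β : ℝ} {ε : ℝ} (hε : 0 < ε) :
    ε • (((1:ℝ),(0:ℝ)) + (Real.cos β, Real.sin β)) ∈ CTR β :=
  ⟨ε, ε, hε, hε, by module⟩

lemma smul_dir_CTL {β : ℝ} {ε : ℝ} (hε : 0 < ε) :
    ε • (((-1:ℝ),(0:ℝ)) + (Real.cos β, Real.sin β)) ∈ CTL β :=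
  ⟨ε, ε, hε, hε, by module⟩

lemma cone_props {β : ℝ} (hs : 0 < Real.sin β) {C : Set (ℝ × ℝ)}
    (hC : IsBetaCone β C) :
    IsOpen C ∧ (∀ u ∈ C, ∀ v ∈ C, u + v ∈ C) ∧
      ∃ d : ℝ × ℝ, ∀ ε : ℝ, 0 < ε → ε • d ∈ C := by
  have hBL : CBL β = Neg.neg ⁻¹' CTR β := rfl
  have hBR : CBR β = Neg.neg ⁻¹' CTL β := rfl
  rcases hC with rfl | rfl | rfl | rfl
  · exact ⟨isOpen_CTR hs, fun u hu v hv => add_mem_CTR hu hv,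
      ⟨_, fun ε hε => smul_dir_CTR hε⟩⟩
  · exact ⟨isOpen_CTL hs, fun u hu v hv => add_mem_CTL hu hv,
      ⟨_, fun ε hε => smul_dir_CTL hε⟩⟩
  · refine ⟨hBL ▸ (isOpen_CTR hs).preimage continuous_neg, ?_, ?_⟩
    · intro u hu v hv
      show -(u + v) ∈ CTR β
      rw [neg_add]
      exact add_mem_CTR hu hv
    · refine ⟨-(((1:ℝ),(0:ℝ)) + (Real.cos β, Real.sin β)), fun ε hε => ?_⟩
      show -(ε • -(((1:ℝ),(0:ℝ)) + (Real.cos β, Real.sin β))) ∈ CTR β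
      rw [smul_neg, neg_neg]
      exact smul_dir_CTR hε
  · refine ⟨hBR ▸ (isOpen_CTL hs).preimage continuous_neg, ?_, ?_⟩
    · intro u hu v hv
      show -(u + v) ∈ CTL β
      rw [neg_add]
      exact add_mem_CTL hu hv
    · refine ⟨-(((-1:ℝ),(0:ℝ)) + (Real.cos β, Real.sin β)), fun ε hε => ?_⟩
      show -(ε • -(((-1:ℝ),(0:ℝ)) + (Real.cos β, Real.sin β))) ∈ CTL β
      rw [smul_neg, neg_neg]
      exact smul_dir_CTL hε

/-- If `x` is in the interior of the hull, each β-quadrant at `x` meets `P`. -/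
lemma interior_meets {β : ℝ} (hs : 0 < Real.sin β) {P : Set (ℝ × ℝ)} {x : ℝ × ℝ}
    (hx : x ∈ interior (betaHull β P)) {C : Set (ℝ × ℝ)} (hC : IsBetaCone β C) :
    (P ∩ quad x C).Nonempty := by
  by_contra h
  rw [Set.not_nonempty_iff_eq_empty] at h
  obtain ⟨-, -, d, hd⟩ := cone_props hs hC
  rw [mem_interior_iff_mem_nhds, Metric.mem_nhds_iff] at hx
  obtain ⟨ε, hε, hball⟩ := hx
  set δ : ℝ := ε / (‖d‖ + 1) with hδdef
  have hδ : 0 < δ := div_pos hε (by positivity)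
  have hy : x + δ • d ∈ Metric.ball x ε := by
    rw [Metric.mem_ball, dist_eq_norm]
    have : x + δ • d - x = δ • d := by abel
    rw [this, norm_smul, Real.norm_eq_abs, abs_of_pos hδ]
    calc δ * ‖d‖ < δ * (‖d‖ + 1) := by nlinarith
      _ = ε := by rw [hδdef]; exact div_mul_cancel₀ ε (by positivity)
  have hmem : x + δ • d ∈ betaHull β P := hball hy
  apply hmem x C hC h
  show x + δ • d - x ∈ C
  have he : x + δ • d - x = δ • d := by abel
  rw [he]
  exact hd δ hδ

theorem interior_betaHull_iff (β : ℝ) (hβ : β ∈ Set.Ioo 0 Real.pi)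
    (P : Set (ℝ × ℝ)) (x : ℝ × ℝ) :
    x ∈ interior (betaHull β P) ↔
      (P ∩ quad x (CTR β)).Nonempty ∧ (P ∩ quad x (CTL β)).Nonempty ∧
      (P ∩ quad x (CBL β)).Nonempty ∧ (P ∩ quad x (CBR β)).Nonempty := by
  have hs : 0 < Real.sin β := Real.sin_pos_of_pos_of_lt_pi hβ.1 hβ.2
  constructor
  · intro hx
    exact ⟨interior_meets hs hx (Or.inl rfl),
      interior_meets hs hx (Or.inr (Or.inl rfl)),
      interior_meets hs hx (Or.inr (Or.inr (Or.inl rfl))),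
      interior_meets hs hx (Or.inr (Or.inr (Or.inr rfl)))⟩
  · rintro ⟨⟨p1, hp1P, hp1⟩, ⟨p2, hp2P, hp2⟩, ⟨p3, hp3P, hp3⟩, ⟨p4, hp4P, hp4⟩⟩
    rw [mem_interior_iff_mem_nhds, Metric.mem_nhds_iff]
    have key : ∀ (C : Set (ℝ × ℝ)), IsBetaCone β C → ∀ p : ℝ × ℝ, p ∈ quad x C →
        ∃ ε > 0, ∀ y ∈ Metric.ball x ε, p ∈ quad y C := by
      intro C hC p hp
      obtain ⟨hopen, -, -⟩ := cone_props hs hC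
      obtain ⟨ε1, hε1, hb⟩ := Metric.isOpen_iff.1 hopen _ hp
      refine ⟨ε1, hε1, fun y hy => hb ?_⟩
      show p - y ∈ Metric.ball (p - x) ε1
      rw [Metric.mem_ball, dist_sub_left]
      rwa [Metric.mem_ball] at hy
    obtain ⟨ε1, hε1, h1⟩ := key _ (Or.inl rfl) p1 hp1
    obtain ⟨ε2, hε2, h2⟩ := key _ (Or.inr (Or.inl rfl)) p2 hp2
    obtain ⟨ε3, hε3, h3⟩ := key _ (Or.inr (Or.inr (Or.inl rfl))) p3 hp3
    obtain ⟨ε4, hε4, h4⟩ := key _ (Or.inr (Or.inr (Or.inr rfl))) p4 hp4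
    refine ⟨min (min ε1 ε2) (min ε3 ε4), by positivity, fun y hy => ?_⟩
    intro a C hC hfree hyq
    obtain ⟨-, hadd, -⟩ := cone_props hs hC
    have hsub : ∀ p : ℝ × ℝ, p ∈ quad y C → p ∈ quad a C := by
      intro p hp
      have := hadd _ hp _ hyq
      show p - a ∈ C
      have he : p - y + (y - a) = p - a := by abel
      rwa [he] at this
    have hmem : ∃ p ∈ P, p ∈ quad y C := by
      have hy1 : y ∈ Metric.ball x ε1 :=
        Metric.ball_subset_ball (le_trans (min_le_left _ _) (min_le_left _ _)) hy
      have hy2 : y ∈ Metric.ball x ε2 :=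
        Metric.ball_subset_ball (le_trans (min_le_left _ _) (min_le_right _ _)) hy
      have hy3 : y ∈ Metric.ball x ε3 :=
        Metric.ball_subset_ball (le_trans (min_le_right _ _) (min_le_left _ _)) hy
      have hy4 : y ∈ Metric.ball x ε4 :=
        Metric.ball_subset_ball (le_trans (min_le_right _ _) (min_le_right _ _)) hy
      rcases hC with rfl | rfl | rfl | rfl
      · exact ⟨p1, hp1P, h1 y hy1⟩
      · exact ⟨p2, hp2P, h2 y hy2⟩
      · exact ⟨p3, hp3P, h3 y hy3⟩
      · exact ⟨p4, hp4P, h4 y hy4⟩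
    obtain ⟨p, hpP, hpq⟩ := hmem
    have : p ∈ P ∩ quad a C := ⟨hpP, hsub p hpq⟩
    rw [hfree] at this
    exact this
end

section
/- For every finite set P ⊆ ℝ² and every β ∈ (0,π), the β-hull O_βH(P) is contained in the convex hull of P: O_βH(P) ⊆ convexHull ℝ P. -/
open Real Set MeasureTheory Pointwise

lemma cone_sep (P : Set (ℝ × ℝ)) (C : Set (ℝ × ℝ)) (u v : ℝ × ℝ)
    (hC : C = {p : ℝ × ℝ | ∃ s t : ℝ, 0 < s ∧ 0 < t ∧ p = s • u + t • v})
    (f : (ℝ × ℝ) →L[ℝ] ℝ) (c : ℝ) (hu : 0 ≤ f u) (hv : 0 ≤ f v)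
    (huv : 0 < f u + f v) (x : ℝ × ℝ) (hx : c < f x)
    (hPf : ∀ p ∈ P, f p < c) :
    ∃ a, x ∈ quad a C ∧ PFree P (quad a C) := by
  set d := f x - c with hd
  have hd0 : 0 < d := sub_pos.2 hx
  set r := d / (f u + f v) with hr
  have hr0 : 0 < r := div_pos hd0 huv
  set a := x - r • (u + v) with ha
  have hfa : f a = c := by
    have : f a = f x - r * (f u + f v) := by
      simp [ha, map_sub, f.map_smul, map_add, smul_eq_mul]
      ring
    rw [this, hr, div_mul_cancel₀ _ (ne_of_gt huv)]
    simp [hd]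
  refine ⟨a, ?_, ?_⟩
  · show x - a ∈ C
    rw [hC]
    exact ⟨r, r, hr0, hr0, by rw [ha]; module⟩
  · rw [PFree, Set.eq_empty_iff_forall_notMem]
    rintro p ⟨hpP, hpQ⟩
    rw [quad, Set.mem_setOf_eq, hC, Set.mem_setOf_eq] at hpQ
    obtain ⟨s, t, hs, ht, heq⟩ := hpQ
    have hp : p = a + (s • u + t • v) := by
      have := heq
      rw [sub_eq_iff_eq_add] at this
      rw [this]; abel
    have hfp : f p = c + (s * f u + t * f v) := by
      rw [hp]
      simp [map_add, f.map_smul, smul_eq_mul, hfa]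
    have hpos : 0 < s * f u + t * f v := by
      have h1 : 0 < f u ∨ 0 < f v := by
        by_contra h
        push_neg at h
        linarith [h.1, h.2]
      rcases h1 with h1 | h1
      · nlinarith [mul_pos hs h1, mul_nonneg ht.le hv]
      · nlinarith [mul_pos ht h1, mul_nonneg hs.le hu]
    have := hPf p hpP
    linarith [hfp ▸ this]

theorem betaHull_subset_convexHull (P : Set (ℝ × ℝ)) (hP : P.Finite)
    (β : ℝ) (hβ : β ∈ Set.Ioo 0 Real.pi) :
    betaHull β P ⊆ convexHull ℝ P := by
  intro x hx
  by_contra hxc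
  set w : ℝ × ℝ := (Real.cos β, Real.sin β) with hw
  have hsin : 0 < Real.sin β := Real.sin_pos_of_pos_of_lt_pi hβ.1 hβ.2
  rcases P.eq_empty_or_nonempty with hPe | ⟨p0, hp0⟩
  · -- P empty: every quadrant is free, and x lies in one, contradiction
    have hfree : PFree P (quad (x - (((1 : ℝ), (0 : ℝ)) + w)) (CTR β)) := by
      simp [PFree, hPe]
    refine hx _ _ (Or.inl rfl) hfree ?_
    show x - (x - (((1 : ℝ), (0 : ℝ)) + w)) ∈ CTR β
    exact ⟨1, 1, one_pos, one_pos, by rw [hw]; module⟩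
  · have hconv : Convex ℝ (convexHull ℝ P) := convex_convexHull ℝ P
    have hclosed : IsClosed (convexHull ℝ P) := hP.isClosed_convexHull ℝ
    obtain ⟨f, c, hfs, hfx⟩ := geometric_hahn_banach_closed_point hconv hclosed hxc
    have hPf : ∀ p ∈ P, f p < c := fun p hp => hfs p (subset_convexHull ℝ P hp)
    set n1 : ℝ := f ((1 : ℝ), (0 : ℝ)) with hn1
    set fw : ℝ := f w with hfw
    have hne : n1 ≠ 0 ∨ fw ≠ 0 := by
      by_contra h
      push_neg at h
      obtain ⟨h1, h2⟩ := h
      set n2 : ℝ := f ((0 : ℝ), (1 : ℝ)) with hn2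
      have hwdec : w = Real.cos β • ((1 : ℝ), (0 : ℝ)) + Real.sin β • ((0 : ℝ), (1 : ℝ)) := by
        rw [hw]; ext <;> simp
      have hfw2 : fw = Real.cos β * n1 + Real.sin β * n2 := by
        rw [hfw, hwdec, map_add, f.map_smul, f.map_smul]
        simp [smul_eq_mul, hn1, hn2]
      have hn2z : n2 = 0 := by
        rw [h1] at hfw2
        rw [hfw2] at h2
        have : Real.sin β * n2 = 0 := by linarith
        exact (mul_eq_zero.1 this).resolve_left (ne_of_gt hsin)
      have hdec : ∀ y : ℝ × ℝ, f y = y.1 * n1 + y.2 * n2 := by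
        intro y
        have hy : f y = f (y.1 • ((1 : ℝ), (0 : ℝ)) + y.2 • ((0 : ℝ), (1 : ℝ))) := by
          congr 1; ext <;> simp
        rw [hy, map_add, f.map_smul, f.map_smul]
        simp [smul_eq_mul, hn1, hn2]
      have hx0 : f x = 0 := by rw [hdec x, h1, hn2z]; ring
      have hp0' : f p0 = 0 := by rw [hdec p0, h1, hn2z]; ring
      have := hPf p0 hp0
      rw [hp0'] at this
      rw [hx0] at hfx
      linarith
    have hneg1 : ((-1 : ℝ), (0 : ℝ)) = -((1 : ℝ), (0 : ℝ)) := by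
      ext <;> simp
    -- CBL and CBR as explicit cones
    have hCBL : CBL β = {p : ℝ × ℝ | ∃ s t : ℝ, 0 < s ∧ 0 < t ∧
        p = s • (-((1 : ℝ), (0 : ℝ))) + t • (-w)} := by
      ext p
      constructor
      · rintro ⟨s, t, hs, ht, h⟩
        exact ⟨s, t, hs, ht, by rw [← neg_neg p, h, hw]; module⟩
      · rintro ⟨s, t, hs, ht, h⟩
        exact ⟨s, t, hs, ht, by rw [h, hw]; module⟩
    have hCBR : CBR β = {p : ℝ × ℝ | ∃ s t : ℝ, 0 < s ∧ 0 < t ∧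
        p = s • ((1 : ℝ), (0 : ℝ)) + t • (-w)} := by
      ext p
      constructor
      · rintro ⟨s, t, hs, ht, h⟩
        rw [hneg1] at h
        exact ⟨s, t, hs, ht, by rw [← neg_neg p, h, hw]; module⟩
      · rintro ⟨s, t, hs, ht, h⟩
        refine ⟨s, t, hs, ht, ?_⟩
        rw [hneg1, h, hw]
        module
    have hCTL : CTL β = {p : ℝ × ℝ | ∃ s t : ℝ, 0 < s ∧ 0 < t ∧
        p = s • (-((1 : ℝ), (0 : ℝ))) + t • w} := by
      ext p
      constructor
      · rintro ⟨s, t, hs, ht, h⟩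
        rw [hneg1] at h
        exact ⟨s, t, hs, ht, by rw [h, hw]⟩
      · rintro ⟨s, t, hs, ht, h⟩
        refine ⟨s, t, hs, ht, ?_⟩
        rw [hneg1, h, hw]
    have hCTR : CTR β = {p : ℝ × ℝ | ∃ s t : ℝ, 0 < s ∧ 0 < t ∧
        p = s • ((1 : ℝ), (0 : ℝ)) + t • w} := by
      rw [hw]; rfl
    rcases le_or_gt 0 n1 with h1 | h1 <;> rcases le_or_gt 0 fw with h2 | h2
    · -- CTR
      have hsum : 0 < f ((1 : ℝ), (0 : ℝ)) + f w := by
        rcases hne with h | h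
        · have : 0 < n1 := lt_of_le_of_ne h1 (Ne.symm h)
          rw [← hn1, ← hfw]; linarith
        · have : 0 < fw := lt_of_le_of_ne h2 (Ne.symm h)
          rw [← hn1, ← hfw]; linarith
      obtain ⟨a, hmem, hfree⟩ := cone_sep P (CTR β) _ _ hCTR f c h1 h2 hsum x hfx hPf
      exact hx a _ (Or.inl rfl) hfree hmem
    · -- fw < 0 ≤ n1 : CBR
      have hv : 0 ≤ f (-w) := by rw [map_neg]; linarith
      have hsum : 0 < f ((1 : ℝ), (0 : ℝ)) + f (-w) := by
        rw [map_neg]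
        have : 0 < -fw := by linarith
        rw [← hn1, ← hfw]; linarith
      obtain ⟨a, hmem, hfree⟩ := cone_sep P (CBR β) _ _ hCBR f c h1 hv hsum x hfx hPf
      exact hx a _ (Or.inr (Or.inr (Or.inr rfl))) hfree hmem
    · -- n1 < 0 ≤ fw : CTL
      have hu : 0 ≤ f (-((1 : ℝ), (0 : ℝ))) := by rw [map_neg]; linarith
      have hsum : 0 < f (-((1 : ℝ), (0 : ℝ))) + f w := by
        rw [map_neg, ← hn1, ← hfw]; linarith
      obtain ⟨a, hmem, hfree⟩ := cone_sep P (CTL β) _ _ hCTL f c hu h2 hsum x hfx hPf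
      exact hx a _ (Or.inr (Or.inl rfl)) hfree hmem
    · -- both negative : CBL
      have hu : 0 ≤ f (-((1 : ℝ), (0 : ℝ))) := by rw [map_neg]; linarith
      have hv : 0 ≤ f (-w) := by rw [map_neg]; linarith
      have hsum : 0 < f (-((1 : ℝ), (0 : ℝ))) + f (-w) := by
        rw [map_neg, map_neg, ← hn1, ← hfw]; linarith
      obtain ⟨a, hmem, hfree⟩ := cone_sep P (CBL β) _ _ hCBL f c hu hv hsum x hfx hPf
      exact hx a _ (Or.inr (Or.inr (Or.inl rfl))) hfree hmem
end

section
/- Let β ∈ (0,π) and P ⊆ ℝ². For every affine line ℓ ⊆ ℝ² whose direction vector is (1,0) or (cos β, sin β), the intersection O_βH(P) ∩ ℓ is a convex set (in particular, it is connected). That is, the β-hull is β-convex: its intersection with every horizontal line and every line of slope tan β is connected. -/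
open Real Set MeasureTheory Pointwise

noncomputable def Ff (β : ℝ) (w : ℝ × ℝ) : ℝ := w.1 * Real.sin β - w.2 * Real.cos β

lemma mem_CTR_iff (β : ℝ) (hs : 0 < Real.sin β) (w : ℝ × ℝ) :
    w ∈ CTR β ↔ 0 < Ff β w ∧ 0 < w.2 := by
  constructor
  · rintro ⟨s, t, hst, htt, rfl⟩
    simp only [Ff, Prod.smul_mk, smul_eq_mul, Prod.mk_add_mk, mul_one, mul_zero]
    constructor
    · nlinarith
    · positivity
  · rintro ⟨h1, h2⟩
    refine ⟨Ff β w / Real.sin β, w.2 / Real.sin β, div_pos h1 hs, div_pos h2 hs, ?_⟩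
    simp only [Prod.smul_mk, smul_eq_mul, Prod.mk_add_mk, Prod.ext_iff, Ff]
    constructor <;> field_simp <;> ring

lemma mem_CTL_iff (β : ℝ) (hs : 0 < Real.sin β) (w : ℝ × ℝ) :
    w ∈ CTL β ↔ 0 < -Ff β w ∧ 0 < w.2 := by
  constructor
  · rintro ⟨s, t, hst, htt, rfl⟩
    simp only [Ff, Prod.smul_mk, smul_eq_mul, Prod.mk_add_mk, mul_zero]
    constructor
    · nlinarith
    · positivity
  · rintro ⟨h1, h2⟩
    refine ⟨-Ff β w / Real.sin β, w.2 / Real.sin β, div_pos h1 hs, div_pos h2 hs, ?_⟩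
    simp only [Prod.smul_mk, smul_eq_mul, Prod.mk_add_mk, Prod.ext_iff, Ff]
    constructor <;> field_simp <;> ring

lemma cone_char (β : ℝ) (hs : 0 < Real.sin β) (C : Set (ℝ × ℝ)) (hC : IsBetaCone β C) :
    ∃ ε₁ ε₂ : ℝ, ∀ w : ℝ × ℝ, w ∈ C ↔ 0 < ε₁ * Ff β w ∧ 0 < ε₂ * w.2 := by
  have hFneg : ∀ w : ℝ × ℝ, Ff β (-w) = -Ff β w := by
    intro w; simp [Ff]; ring
  rcases hC with h | h | h | h
  · exact ⟨1, 1, fun w => by rw [h, mem_CTR_iff β hs]; simp⟩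
  · exact ⟨-1, 1, fun w => by rw [h, mem_CTL_iff β hs]; simp⟩
  · refine ⟨-1, -1, fun w => ?_⟩
    rw [h]
    show -w ∈ CTR β ↔ _
    rw [mem_CTR_iff β hs, hFneg]
    simp
  · refine ⟨1, -1, fun w => ?_⟩
    rw [h]
    show -w ∈ CTL β ↔ _
    rw [mem_CTL_iff β hs, hFneg]
    simp

lemma quad_miss (β : ℝ) (hs : 0 < Real.sin β) (C : Set (ℝ × ℝ))
    (hC : IsBetaCone β C) (b x y : ℝ × ℝ) (lam mu : ℝ)
    (hlam : 0 ≤ lam) (hmu : 0 ≤ mu) (hsum : lam + mu = 1)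
    (hdir : x.2 = y.2 ∨ Ff β x = Ff β y)
    (hx : x ∉ quad b C) (hy : y ∉ quad b C) :
    lam • x + mu • y ∉ quad b C := by
  obtain ⟨ε₁, ε₂, hchar⟩ := cone_char β hs C hC
  intro hz
  have hz' := (hchar _).mp hz
  have hxs : ¬ (0 < ε₁ * Ff β (x - b) ∧ 0 < ε₂ * (x - b).2) := fun h => hx ((hchar _).mpr h)
  have hys : ¬ (0 < ε₁ * Ff β (y - b) ∧ 0 < ε₂ * (y - b).2) := fun h => hy ((hchar _).mpr h)
  have hF : ∀ u w : ℝ × ℝ, Ff β (u - w) = Ff β u - Ff β w := by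
    intro u w; simp [Ff, Prod.fst_sub, Prod.snd_sub]; ring
  have hFz : Ff β (lam • x + mu • y) = lam * Ff β x + mu * Ff β y := by
    simp [Ff, Prod.fst_add, Prod.snd_add, Prod.smul_fst, Prod.smul_snd, smul_eq_mul]; ring
  have hsnd : (lam • x + mu • y - b).2 = lam * x.2 + mu * y.2 - b.2 := by
    simp [Prod.snd_sub, Prod.snd_add, Prod.smul_snd, smul_eq_mul]
  rw [hF, hFz, hsnd] at hz'
  obtain ⟨hz1, hz2⟩ := hz'
  simp only [hF] at hxs hys
  have hx2 : (x - b).2 = x.2 - b.2 := by simp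
  have hy2 : (y - b).2 = y.2 - b.2 := by simp
  rw [hx2] at hxs; rw [hy2] at hys
  rcases hdir with hd | hd
  · -- x.2 = y.2 : the ε₂ condition is constant along the line
    have heq : ε₂ * (lam * x.2 + mu * y.2 - b.2) = ε₂ * (x.2 - b.2) := by
      rw [← hd]; have h : mu = 1 - lam := by linarith
      rw [h]; ring
    have hex : 0 < ε₂ * (x.2 - b.2) := heq ▸ hz2
    have hey : 0 < ε₂ * (y.2 - b.2) := by rw [← hd]; exact hex
    have hAx : ε₁ * (Ff β x - Ff β b) ≤ 0 :=
      le_of_not_gt (fun h => hxs ⟨h, hex⟩)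
    have hAy : ε₁ * (Ff β y - Ff β b) ≤ 0 :=
      le_of_not_gt (fun h => hys ⟨h, hey⟩)
    have h1 : lam * (ε₁ * (Ff β x - Ff β b)) ≤ 0 :=
      mul_nonpos_of_nonneg_of_nonpos hlam hAx
    have h2 : mu * (ε₁ * (Ff β y - Ff β b)) ≤ 0 :=
      mul_nonpos_of_nonneg_of_nonpos hmu hAy
    have hb : ε₁ * (lam * Ff β x + mu * Ff β y - Ff β b)
        = lam * (ε₁ * (Ff β x - Ff β b)) + mu * (ε₁ * (Ff β y - Ff β b)) := by
      have h : mu = 1 - lam := by linarith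
      rw [h]; ring
    rw [hb] at hz1; linarith
  · -- Ff constant along the line
    have heq : ε₁ * (lam * Ff β x + mu * Ff β y - Ff β b) = ε₁ * (Ff β x - Ff β b) := by
      rw [← hd]; have h : mu = 1 - lam := by linarith
      rw [h]; ring
    have hex : 0 < ε₁ * (Ff β x - Ff β b) := heq ▸ hz1
    have hey : 0 < ε₁ * (Ff β y - Ff β b) := by rw [← hd]; exact hex
    have hBx : ε₂ * (x.2 - b.2) ≤ 0 :=
      le_of_not_gt (fun h => hxs ⟨hex, h⟩)
    have hBy : ε₂ * (y.2 - b.2) ≤ 0 :=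
      le_of_not_gt (fun h => hys ⟨hey, h⟩)
    have h1 : lam * (ε₂ * (x.2 - b.2)) ≤ 0 :=
      mul_nonpos_of_nonneg_of_nonpos hlam hBx
    have h2 : mu * (ε₂ * (y.2 - b.2)) ≤ 0 :=
      mul_nonpos_of_nonneg_of_nonpos hmu hBy
    have hb : ε₂ * (lam * x.2 + mu * y.2 - b.2)
        = lam * (ε₂ * (x.2 - b.2)) + mu * (ε₂ * (y.2 - b.2)) := by
      have h : mu = 1 - lam := by linarith
      rw [h]; ring
    rw [hb] at hz2; linarith

theorem betaHull_betaConvex (β : ℝ) (hβ : β ∈ Set.Ioo 0 Real.pi) (P : Set (ℝ × ℝ)) :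
    ∀ (a v : ℝ × ℝ), (v = ((1 : ℝ), (0 : ℝ)) ∨ v = (Real.cos β, Real.sin β)) →
      Convex ℝ (betaHull β P ∩ {x | ∃ t : ℝ, x = a + t • v}) := by
  intro a v hv
  have hs : 0 < Real.sin β := Real.sin_pos_of_pos_of_lt_pi hβ.1 hβ.2
  rintro x ⟨hxH, t₁, rfl⟩ y ⟨hyH, t₂, rfl⟩ lam mu hlam hmu hsum
  constructor
  · intro b C hC hfree
    refine quad_miss β hs C hC b _ _ lam mu hlam hmu hsum ?_
      (hxH b C hC hfree) (hyH b C hC hfree)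
    rcases hv with rfl | rfl
    · left; simp
    · right; simp [Ff]; ring
  · refine ⟨lam * t₁ + mu * t₂, ?_⟩
    have : lam • (a + t₁ • v) + mu • (a + t₂ • v)
        = (lam + mu) • a + (lam * t₁ + mu * t₂) • v := by module
    rw [this, hsum, one_smul]
end

section
/- Let P ⊆ ℝ² be a finite set and let p ∈ P. Then the set of angles {β ∈ (0,π) : the top-right β-quadrant p + C_TR(β) is P-free} is either all of (0,π), or equal to the half-open interval (0, α] for some α ∈ (0,π). (In other words, p leaves the top-right β-staircase at most once during an increasing sweep, at a well-defined deletion-event angle α.) -/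
open Real Set MeasureTheory Pointwise

lemma mem_CTR_iff_s6 {β : ℝ} (hβ : β ∈ Set.Ioo 0 Real.pi) (v : ℝ × ℝ) :
    v ∈ CTR β ↔ 0 < v.2 ∧ Real.cos β * v.2 < Real.sin β * v.1 := by
  obtain ⟨hβ0, hβπ⟩ := hβ
  have hs : 0 < Real.sin β := Real.sin_pos_of_pos_of_lt_pi hβ0 hβπ
  constructor
  · rintro ⟨s, t, hs', ht, rfl⟩
    simp only [Prod.smul_mk, smul_eq_mul, Prod.mk_add_mk, mul_one, mul_zero]
    constructor
    · nlinarith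
    · nlinarith
  · rintro ⟨hy, hlt⟩
    refine ⟨(Real.sin β * v.1 - Real.cos β * v.2) / Real.sin β, v.2 / Real.sin β, ?_, ?_, ?_⟩
    · apply div_pos; linarith; exact hs
    · exact div_pos hy hs
    · have h1 : v.2 / Real.sin β * Real.sin β = v.2 := div_mul_cancel₀ _ (ne_of_gt hs)
      apply Prod.ext
      · simp only [Prod.smul_mk, smul_eq_mul, Prod.mk_add_mk, mul_one, mul_zero]
        field_simp
        ring
      · simp only [Prod.smul_mk, smul_eq_mul, Prod.mk_add_mk, mul_one, mul_zero]
        field_simp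
        ring

noncomputable def theta (v : ℝ × ℝ) : ℝ := Real.arccos (v.1 / Real.sqrt (v.1 ^ 2 + v.2 ^ 2))

lemma theta_props {v : ℝ × ℝ} (hv : 0 < v.2) :
    theta v ∈ Set.Ioo 0 Real.pi ∧
      ∀ β ∈ Set.Ioo 0 Real.pi,
        (Real.cos β * v.2 < Real.sin β * v.1 ↔ theta v < β) := by
  set r := Real.sqrt (v.1 ^ 2 + v.2 ^ 2) with hr
  have hr2 : r ^ 2 = v.1 ^ 2 + v.2 ^ 2 := Real.sq_sqrt (by positivity)
  have hrpos : 0 < r := Real.sqrt_pos.mpr (by nlinarith)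
  have hx1 : v.1 / r < 1 := by
    rw [div_lt_one hrpos]; nlinarith
  have hx2 : -1 < v.1 / r := by
    rw [lt_div_iff₀ hrpos]; nlinarith
  have hθ0 : 0 < theta v := Real.arccos_pos.mpr hx1
  have hcos : Real.cos (theta v) = v.1 / r := Real.cos_arccos (le_of_lt hx2) (le_of_lt hx1)
  have hθπ : theta v < Real.pi := by
    rcases lt_or_eq_of_le (Real.arccos_le_pi (v.1 / r)) with h | h
    · exact h
    · exfalso
      have h2 := hcos
      rw [theta] at h2
      rw [h, Real.cos_pi] at h2
      linarith
  have hsin : Real.sin (theta v) = v.2 / r := by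
    rw [theta, Real.sin_arccos]
    have h1 : 1 - (v.1 / r) ^ 2 = (v.2 / r) ^ 2 := by
      field_simp
      nlinarith
    rw [← hr, h1, Real.sqrt_sq (le_of_lt (div_pos hv hrpos))]
  refine ⟨⟨hθ0, hθπ⟩, ?_⟩
  rintro β ⟨hβ0, hβπ⟩
  have key : Real.cos β * v.2 < Real.sin β * v.1 ↔
      0 < Real.sin (β - theta v) := by
    rw [Real.sin_sub, hcos, hsin]
    have heq : Real.sin β * (v.1 / r) - Real.cos β * (v.2 / r) =
        (Real.sin β * v.1 - Real.cos β * v.2) / r := by ring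
    rw [heq, lt_div_iff₀ hrpos, zero_mul]
    constructor
    · intro h; linarith
    · intro h; linarith
  rw [key]
  constructor
  · intro h
    by_contra hle
    push_neg at hle
    have h1 : Real.sin (theta v - β) ≥ 0 :=
      Real.sin_nonneg_of_nonneg_of_le_pi (by linarith) (by linarith)
    rw [show β - theta v = -(theta v - β) by ring, Real.sin_neg] at h
    linarith
  · intro h
    exact Real.sin_pos_of_pos_of_lt_pi (by linarith) (by linarith)

lemma PFree_iff {β : ℝ} (hβ : β ∈ Set.Ioo 0 Real.pi) (P : Set (ℝ × ℝ)) (p : ℝ × ℝ) :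
    PFree P (quad p (CTR β)) ↔ ∀ q ∈ P, 0 < (q - p).2 → β ≤ theta (q - p) := by
  rw [PFree, Set.eq_empty_iff_forall_notMem]
  constructor
  · intro h q hq hq2
    by_contra hlt
    push_neg at hlt
    apply h q
    refine ⟨hq, ?_⟩
    show q - p ∈ CTR β
    rw [mem_CTR_iff_s6 hβ]
    exact ⟨hq2, ((theta_props hq2).2 β hβ).mpr hlt⟩
  · rintro h q ⟨hq, hq'⟩
    have hmem : q - p ∈ CTR β := hq'
    rw [mem_CTR_iff_s6 hβ] at hmem
    obtain ⟨h1, h2⟩ := hmem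
    have := h q hq h1
    exact absurd (((theta_props h1).2 β hβ).mp h2) (not_lt.mpr this)

theorem deletion_event_TR (P : Set (ℝ × ℝ)) (hP : P.Finite) (p : ℝ × ℝ) (hp : p ∈ P) :
    {β | β ∈ Set.Ioo 0 Real.pi ∧ PFree P (quad p (CTR β))} = Set.Ioo 0 Real.pi ∨
    ∃ α ∈ Set.Ioo 0 Real.pi,
      {β | β ∈ Set.Ioo 0 Real.pi ∧ PFree P (quad p (CTR β))} = Set.Ioc 0 α := by
  classical
  set Q : Finset (ℝ × ℝ) := hP.toFinset.filter (fun q => 0 < (q - p).2) with hQdef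
  have hQmem : ∀ q : ℝ × ℝ, q ∈ Q ↔ q ∈ P ∧ 0 < (q - p).2 := by
    intro q
    simp [hQdef, Set.Finite.mem_toFinset]
  by_cases hQ : Q.Nonempty
  · right
    set T : Finset ℝ := Q.image (fun q => theta (q - p)) with hTdef
    have hT : T.Nonempty := hQ.image _
    set α := T.min' hT with hα
    have hαmem : α ∈ T := T.min'_mem hT
    obtain ⟨q0, hq0, hq0α⟩ := Finset.mem_image.mp hαmem
    have hq0' := (hQmem q0).mp hq0
    have hαIoo : α ∈ Set.Ioo 0 Real.pi := by
      rw [← hq0α]; exact (theta_props hq0'.2).1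
    refine ⟨α, hαIoo, ?_⟩
    ext β
    simp only [Set.mem_setOf_eq, Set.mem_Ioo, Set.mem_Ioc]
    constructor
    · rintro ⟨⟨hβ0, hβπ⟩, hfree⟩
      refine ⟨hβ0, ?_⟩
      rw [PFree_iff ⟨hβ0, hβπ⟩] at hfree
      rw [hα]
      apply Finset.le_min'
      intro y hy
      obtain ⟨q, hq, rfl⟩ := Finset.mem_image.mp hy
      have hq' := (hQmem q).mp hq
      exact hfree q hq'.1 hq'.2
    · rintro ⟨hβ0, hβα⟩
      have hβπ : β < Real.pi := lt_of_le_of_lt hβα hαIoo.2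
      refine ⟨⟨hβ0, hβπ⟩, ?_⟩
      rw [PFree_iff ⟨hβ0, hβπ⟩]
      intro q hq hq2
      have hqQ : q ∈ Q := (hQmem q).mpr ⟨hq, hq2⟩
      have : α ≤ theta (q - p) :=
        T.min'_le _ (Finset.mem_image.mpr ⟨q, hqQ, rfl⟩)
      linarith
  · left
    ext β
    simp only [Set.mem_setOf_eq]
    constructor
    · rintro ⟨h, _⟩; exact h
    · intro hβ
      refine ⟨hβ, ?_⟩
      rw [PFree_iff hβ]
      intro q hq hq2
      exact absurd ⟨q, (hQmem q).mpr ⟨hq, hq2⟩⟩ hQ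
end

section
/- Let P ⊆ ℝ² be a finite set and let p ∈ P. Then the set of angles {β ∈ (0,π) : the top-left β-quadrant p + C_TL(β) is P-free} is either all of (0,π), or equal to the half-open interval [α, π) for some α ∈ (0,π). (In other words, p joins the top-left β-staircase at most once during an increasing sweep, at a well-defined insertion-event angle α.) -/
open Real Set MeasureTheory Pointwise

lemma mem_CTL_iff_s7 {β : ℝ} (hβ : β ∈ Set.Ioo 0 Real.pi) (q : ℝ × ℝ) :
    q ∈ CTL β ↔ 0 < q.2 ∧ q.1 * Real.sin β < q.2 * Real.cos β := by
  have hs : 0 < Real.sin β := Real.sin_pos_of_pos_of_lt_pi hβ.1 hβ.2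
  constructor
  · rintro ⟨s, t, hs', ht, rfl⟩
    simp only [Prod.smul_mk, smul_eq_mul, Prod.mk_add_mk, Prod.fst, Prod.snd]
    exact ⟨by nlinarith, by nlinarith⟩
  · rintro ⟨h2, hlt⟩
    refine ⟨(q.2 * Real.cos β - q.1 * Real.sin β) / Real.sin β, q.2 / Real.sin β, ?_, ?_, ?_⟩
    · exact div_pos (by linarith) hs
    · exact div_pos h2 hs
    · apply Prod.ext <;> simp <;> field_simp <;> ring

lemma CTL_anti {β β' : ℝ} (hβ : 0 < β) (hle : β ≤ β') (hβ' : β' < Real.pi) :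
    CTL β' ⊆ CTL β := by
  intro q hq
  have hβm : β ∈ Set.Ioo 0 Real.pi := ⟨hβ, lt_of_le_of_lt hle hβ'⟩
  have hβ'm : β' ∈ Set.Ioo 0 Real.pi := ⟨lt_of_lt_of_le hβ hle, hβ'⟩
  rw [mem_CTL_iff_s7 hβ'm] at hq
  rw [mem_CTL_iff_s7 hβm]
  refine ⟨hq.1, ?_⟩
  have hs : 0 < Real.sin β := Real.sin_pos_of_pos_of_lt_pi hβm.1 hβm.2
  have hs' : 0 < Real.sin β' := Real.sin_pos_of_pos_of_lt_pi hβ'm.1 hβ'm.2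
  have hd : 0 ≤ Real.sin (β' - β) :=
    Real.sin_nonneg_of_nonneg_of_le_pi (by linarith) (by linarith)
  have hsub : Real.sin (β' - β) = Real.sin β' * Real.cos β - Real.cos β' * Real.sin β :=
    Real.sin_sub β' β
  nlinarith [mul_nonneg hq.1.le hd, mul_pos (sub_pos.mpr hq.2) hs]

lemma pfree_iff (P : Set (ℝ × ℝ)) (p : ℝ × ℝ) (C : Set (ℝ × ℝ)) :
    PFree P (quad p C) ↔ ∀ q ∈ P, q - p ∉ C := by
  simp [PFree, quad, Set.eq_empty_iff_forall_notMem, Set.mem_inter_iff, not_and]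

theorem insertion_event_TL (P : Set (ℝ × ℝ)) (hP : P.Finite) (p : ℝ × ℝ) (hp : p ∈ P) :
    {β | β ∈ Set.Ioo 0 Real.pi ∧ PFree P (quad p (CTL β))} = Set.Ioo 0 Real.pi ∨
    ∃ α ∈ Set.Ioo 0 Real.pi,
      {β | β ∈ Set.Ioo 0 Real.pi ∧ PFree P (quad p (CTL β))} = Set.Ico α Real.pi := by
  set S := {β | β ∈ Set.Ioo 0 Real.pi ∧ PFree P (quad p (CTL β))} with hS
  have hpi : (0 : ℝ) < Real.pi := Real.pi_pos
  have hne : S.Nonempty := by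
    have hev : ∀ᶠ β in nhdsWithin Real.pi (Set.Iio Real.pi),
        ∀ q ∈ P, (q - p).1 * Real.sin β ≥ (q - p).2 * Real.cos β ∨ (q - p).2 ≤ 0 := by
      rw [Set.Finite.eventually_all hP]
      intro q hq
      rcases le_or_gt (q - p).2 0 with h2 | h2
      · exact Filter.Eventually.of_forall fun _ => Or.inr h2
      · have hcont : Filter.Tendsto
            (fun β => (q - p).2 * Real.cos β - (q - p).1 * Real.sin β)
            (nhdsWithin Real.pi (Set.Iio Real.pi))
            (nhds ((q - p).2 * Real.cos Real.pi - (q - p).1 * Real.sin Real.pi)) := by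
          apply Filter.Tendsto.mono_left _ nhdsWithin_le_nhds
          exact (Continuous.sub (continuous_const.mul Real.continuous_cos)
            (continuous_const.mul Real.continuous_sin)).tendsto _
        have hneg : (q - p).2 * Real.cos Real.pi - (q - p).1 * Real.sin Real.pi < 0 := by
          rw [Real.cos_pi, Real.sin_pi]; linarith
        have := hcont.eventually_lt_const hneg
        filter_upwards [this] with β hβ
        left; linarith
    have hev2 : ∀ᶠ β in nhdsWithin Real.pi (Set.Iio Real.pi), β ∈ Set.Ioo 0 Real.pi := by
      have : Set.Ioo 0 Real.pi ∈ nhdsWithin Real.pi (Set.Iio Real.pi) :=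
        mem_nhdsWithin.mpr ⟨Set.Ioi 0, isOpen_Ioi, hpi, fun x hx => ⟨hx.1, hx.2⟩⟩
      exact this
    obtain ⟨β, hβ1, hβ2⟩ := (hev.and hev2).exists
    refine ⟨β, hβ2, (pfree_iff P p _).mpr fun q hq hmem => ?_⟩
    rw [mem_CTL_iff_s7 hβ2] at hmem
    rcases hβ1 q hq with h | h
    · linarith [hmem.2]
    · linarith [hmem.1]
  have hup : ∀ β ∈ S, ∀ β', β ≤ β' → β' < Real.pi → β' ∈ S := by
    rintro β ⟨hβm, hfree⟩ β' hle hβ'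
    refine ⟨⟨lt_of_lt_of_le hβm.1 hle, hβ'⟩, ?_⟩
    rw [pfree_iff] at hfree ⊢
    exact fun q hq hmem => hfree q hq (CTL_anti hβm.1 hle hβ' hmem)
  by_cases hall : S = Set.Ioo 0 Real.pi
  · exact Or.inl hall
  · right
    have hbdd : BddBelow S := ⟨0, fun β hβ => (hβ.1.1).le⟩
    set α := sInf S with hα
    obtain ⟨β₀, hβ₀⟩ := hne
    have hαle : α ≤ β₀ := csInf_le hbdd hβ₀
    have hαπ : α < Real.pi := lt_of_le_of_lt hαle hβ₀.1.2
    have hne' : S.Nonempty := ⟨β₀, hβ₀⟩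
    have hα0 : 0 < α := by
      by_contra h
      push_neg at h
      apply hall
      apply Set.Subset.antisymm (fun β hβ => hβ.1)
      intro β hβ
      obtain ⟨γ, hγS, hγβ⟩ := exists_lt_of_csInf_lt hne' (lt_of_le_of_lt h hβ.1)
      exact hup γ hγS β hγβ.le hβ.2
    have hαm : α ∈ Set.Ioo 0 Real.pi := ⟨hα0, hαπ⟩
    have hαS : α ∈ S := by
      refine ⟨hαm, ?_⟩
      rw [pfree_iff]
      intro q hq hmem
      rw [mem_CTL_iff_s7 hαm] at hmem
      have hf : ContinuousAt (fun β => (q - p).2 * Real.cos β - (q - p).1 * Real.sin β) α :=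
        ((continuous_const.mul Real.continuous_cos).sub
          (continuous_const.mul Real.continuous_sin)).continuousAt
      have hpos : (0:ℝ) < (q - p).2 * Real.cos α - (q - p).1 * Real.sin α := by
        linarith [hmem.2]
      have hev : ∀ᶠ β in nhds α,
          0 < (q - p).2 * Real.cos β - (q - p).1 * Real.sin β :=
        hf.eventually (eventually_gt_nhds hpos)
      rw [Metric.eventually_nhds_iff] at hev
      obtain ⟨δ, hδ, hδev⟩ := hev
      obtain ⟨β, hβS, hβlt⟩ := exists_lt_of_csInf_lt hne' (by linarith : sInf S < α + δ)
      have hαβ : α ≤ β := csInf_le hbdd hβS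
      have hfβ : 0 < (q - p).2 * Real.cos β - (q - p).1 * Real.sin β := by
        apply hδev
        rw [Real.dist_eq, abs_lt]
        constructor <;> linarith
      have hin : q - p ∈ CTL β := by
        rw [mem_CTL_iff_s7 hβS.1]
        exact ⟨hmem.1, by linarith⟩
      exact (pfree_iff P p _).mp hβS.2 q hq hin
    refine ⟨α, hαm, ?_⟩
    apply Set.Subset.antisymm
    · exact fun β hβ => ⟨csInf_le hbdd hβ, hβ.1.2⟩
    · exact fun β hβ => hup α hαS β hβ.1 hβ.2
end
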